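/- arXiv:2209.03250 — 4 statements merged into one kernel-verified Lean document; each statement's English description precedes it below -/
import Mathlib

section
/- Asymptotic convergence of the pose and rate tracking errors (Theorem 2, assembled form): suppose Λ ∈ ℝ^{6×6} is symmetric positive definite, p̃ : [0,∞) → ℝ⁶ is continuously differentiable with ṗ̃(t) = −Λ p̃(t) + s(t), where s : [0,∞) → ℝ⁶ is continuous with ∫₀^∞ ‖s(t)‖² dt < ∞; suppose ν̃_r(t) = P(t) s(t) where P : [0,∞) → ℝ^{6×6} is continuous and uniformly bounded (sup_t ‖P(t)‖ < ∞), ν̃_r is continuously differentiable with ν̃̇_r uniformly bounded, and define ν̃(t) = ν̃_r(t) − P(t) Λ p̃(t). Then p̃(t) → 0, ν̃_r(t) → 0, and ν̃(t) → 0 as t → ∞. -/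
open Matrix MeasureTheory Filter Topology Set
open scoped NNReal RealInnerProductSpace

/-!
Let `m > 0` be a coercivity constant of `Λ`. Then `W = ‖p̃‖²` satisfies `Ẇ ≤ -m W + ‖s‖² / m`,
so `e^{mt} (W t - ∫ₐᵗ ‖s‖² / m)` is nonincreasing and
`W t ≤ e^{-m (t - a)} W a + ∫ₐ^∞ ‖s‖² / m`; letting `t → ∞` and then `a → ∞` gives `p̃ → 0`.
The rate error `ν̃_r = P s` is square integrable because `P` is bounded, and Lipschitz because its
derivative is bounded. Such a function tends to `0` (Barbalat): if `‖ν̃_r t‖ ≥ ε`, then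
`‖ν̃_r‖ ≥ ε / 2` on a window of fixed length after `t`, against the vanishing of the tails
`∫ₜ^∞ ‖ν̃_r‖²`. Finally `ν̃ = ν̃_r - P Λ p̃` with `P` bounded.
The dot-product squares of the statement are squared Euclidean norms, so the argument is run in
`EuclideanSpace ℝ ι`.
-/

theorem tendsto_setIntegral_Ioi_atTop_zero {E : Type*} [NormedAddCommGroup E] [NormedSpace ℝ E]
    {f : ℝ → E} {a : ℝ} (hf : IntegrableOn f (Ioi a)) :
    Tendsto (fun T => ∫ t in Ioi T, f t) atTop (𝓝 0) := by
  have h := tendsto_setIntegral_of_antitone (fun T => measurableSet_Ioi)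
    (fun _ _ hST => Ioi_subset_Ioi hST) ⟨a, hf⟩
  have hempty : ⋂ T : ℝ, Ioi T = ∅ :=
    eq_empty_of_forall_notMem fun x hx => lt_irrefl x (mem_iInter.1 hx x)
  rwa [hempty, setIntegral_empty] at h

theorem tendsto_zero_of_tendsto_norm_sq {α E : Type*} [SeminormedAddCommGroup E] {l : Filter α}
    {f : α → E} (h : Tendsto (fun x => ‖f x‖ ^ 2) l (𝓝 0)) : Tendsto f l (𝓝 0) := by
  rw [tendsto_zero_iff_norm_tendsto_zero]
  have := (Real.continuous_sqrt.tendsto 0).comp h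
  simpa [Function.comp_def, Real.sqrt_sq (norm_nonneg _)] using this

theorem mul_le_setIntegral_norm_sq_of_lipschitzOnWith {E : Type*} [SeminormedAddCommGroup E]
    {f : ℝ → E} {K : ℝ≥0} {a t ε δ : ℝ} (hf : LipschitzOnWith K f (Ici a))
    (hint : IntegrableOn (fun t => ‖f t‖ ^ 2) (Ioc t (t + δ))) (ht : a ≤ t) (hε : 0 ≤ ε)
    (hδ : 0 ≤ δ) (hKδ : K * δ ≤ ε / 2) (hft : ε ≤ ‖f t‖) :
    (ε / 2) ^ 2 * δ ≤ ∫ τ in Ioc t (t + δ), ‖f τ‖ ^ 2 := by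
  have hlow : ∀ τ ∈ Ioc t (t + δ), (ε / 2) ^ 2 ≤ ‖f τ‖ ^ 2 := by
    intro τ hτ
    have hdist := hf.dist_le_mul τ (le_trans ht hτ.1.le) t ht
    rw [dist_eq_norm, Real.dist_eq, abs_of_pos (sub_pos.2 hτ.1)] at hdist
    have hKτ : K * (τ - t) ≤ K * δ := mul_le_mul_of_nonneg_left (by linarith [hτ.2]) K.2
    gcongr
    linarith [norm_sub_norm_le (f t) (f τ), norm_sub_rev (f t) (f τ)]
  have := setIntegral_ge_of_const_le measurableSet_Ioc (by simp) hlow hint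
  rwa [Real.volume_real_Ioc_of_le (by linarith), add_sub_cancel_left, smul_eq_mul,
    mul_comm] at this

theorem tendsto_zero_of_lipschitzOnWith_of_integrableOn_norm_sq {E : Type*}
    [SeminormedAddCommGroup E] {f : ℝ → E} {K : ℝ≥0} {a : ℝ} (hf : LipschitzOnWith K f (Ici a))
    (hint : IntegrableOn (fun t => ‖f t‖ ^ 2) (Ici a)) : Tendsto f atTop (𝓝 0) := by
  rw [tendsto_zero_iff_norm_tendsto_zero]
  refine tendsto_order.2 ⟨fun r hr => Eventually.of_forall fun t => hr.trans_le (norm_nonneg _),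
    fun ε hε => ?_⟩
  set δ := ε / (2 * (K + 1))
  have hδ : 0 < δ := by positivity
  have hKδ : K * δ ≤ ε / 2 := by
    rw [show ε / 2 = (K + 1) * δ by simp only [δ]; field_simp]
    exact mul_le_mul_of_nonneg_right (by linarith) hδ.le
  have hIoi : IntegrableOn (fun t => ‖f t‖ ^ 2) (Ioi a) := hint.mono_set Ioi_subset_Ici_self
  filter_upwards [(tendsto_setIntegral_Ioi_atTop_zero hIoi).eventually
    (gt_mem_nhds (by positivity : 0 < (ε / 2) ^ 2 * δ)), eventually_ge_atTop a] with t htail ht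
  by_contra! hft
  have hIoi_t : IntegrableOn (fun t => ‖f t‖ ^ 2) (Ioi t) :=
    hint.mono_set fun τ hτ => ht.trans (le_of_lt hτ)
  have hwindow := mul_le_setIntegral_norm_sq_of_lipschitzOnWith hf
    (hIoi_t.mono_set Ioc_subset_Ioi_self) ht hε.le hδ.le hKδ hft
  have hmono : ∫ τ in Ioc t (t + δ), ‖f τ‖ ^ 2 ≤ ∫ τ in Ioi t, ‖f τ‖ ^ 2 :=
    setIntegral_mono_set hIoi_t (Eventually.of_forall fun _ => by positivity)
      (Eventually.of_forall fun _ hτ => hτ.1)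
  linarith

theorem antitoneOn_exp_mul_mul_sub_integral {W W' g : ℝ → ℝ} {a b m : ℝ}
    (hm : 0 ≤ m) (hW : ∀ t ∈ Ici a, HasDerivWithinAt W (W' t) (Ici a) t)
    (hW' : ∀ t ∈ Ici a, W' t ≤ -m * W t + g t) (hg : ContinuousOn g (Ici a))
    (hg0 : ∀ t ∈ Ici a, 0 ≤ g t) (hab : a ≤ b) :
    AntitoneOn (fun t => Real.exp (m * t) * (W t - ∫ τ in a..t, g τ)) (Icc a b) := by
  have hgi : IntegrableOn g (Icc a b) := (hg.mono Icc_subset_Ici_self).integrableOn_Icc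
  have hcont : ContinuousOn (fun t => Real.exp (m * t) * (W t - ∫ τ in a..t, g τ)) (Icc a b) := by
    refine (Real.continuous_exp.comp (continuous_const_mul m)).continuousOn.mul
      (ContinuousOn.sub (fun t ht => (hW t ht.1).continuousWithinAt.mono Icc_subset_Ici_self) ?_)
    have := intervalIntegral.continuousOn_primitive_interval (hgi.mono_set (uIcc_of_le hab).le)
    rwa [uIcc_of_le hab] at this
  have hderiv : ∀ t ∈ Ioo a b,
      HasDerivAt (fun t => Real.exp (m * t) * (W t - ∫ τ in a..t, g τ))
        (Real.exp (m * t) * (m * (W t - ∫ τ in a..t, g τ) + W' t - g t)) t := by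
    intro t ht
    have hnhds : Ici a ∈ 𝓝 t := Ici_mem_nhds ht.1
    have hWt := (hW t ht.1.le).hasDerivAt hnhds
    have hG : HasDerivAt (fun u => ∫ τ in a..u, g τ) (g t) t :=
      intervalIntegral.integral_hasDerivAt_right
        ((hg.mono (uIcc_of_le ht.1.le ▸ Icc_subset_Ici_self)).intervalIntegrable)
        ((hg.mono Ioi_subset_Ici_self).stronglyMeasurableAtFilter isOpen_Ioi t ht.1)
        (hg.continuousAt hnhds)
    have hexp : HasDerivAt (fun u => Real.exp (m * u)) (Real.exp (m * t) * m) t := by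
      simpa using ((hasDerivAt_id t).const_mul m).exp
    exact (hexp.fun_mul (hWt.fun_sub hG)).congr_deriv (by ring)
  refine antitoneOn_of_hasDerivWithinAt_nonpos (convex_Icc a b) hcont
    (fun t ht => (hderiv t (by rwa [interior_Icc] at ht)).hasDerivWithinAt) fun t ht => ?_
  rw [interior_Icc] at ht
  -- the derivative is at most `-m e^{mt} ∫ₐᵗ g ≤ 0`
  have hG0 : 0 ≤ ∫ τ in a..t, g τ :=
    intervalIntegral.integral_nonneg ht.1.le fun τ hτ => hg0 τ hτ.1
  have hWt := hW' t ht.1.le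
  have hmG0 : 0 ≤ m * ∫ τ in a..t, g τ := mul_nonneg hm hG0
  exact mul_nonpos_of_nonneg_of_nonpos (Real.exp_pos _).le (by linarith)

theorem le_exp_mul_add_integral_of_hasDerivWithinAt_le {W W' g : ℝ → ℝ} {a b m : ℝ}
    (hm : 0 ≤ m) (hW : ∀ t ∈ Ici a, HasDerivWithinAt W (W' t) (Ici a) t)
    (hW' : ∀ t ∈ Ici a, W' t ≤ -m * W t + g t) (hg : ContinuousOn g (Ici a))
    (hg0 : ∀ t ∈ Ici a, 0 ≤ g t) (hab : a ≤ b) :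
    W b ≤ Real.exp (-(m * (b - a))) * W a + ∫ t in a..b, g t := by
  have hvb := antitoneOn_exp_mul_mul_sub_integral hm hW hW' hg hg0 hab
    (left_mem_Icc.2 hab) (right_mem_Icc.2 hab) hab
  simp only [intervalIntegral.integral_same, sub_zero] at hvb
  have hexp : Real.exp (-(m * (b - a))) = Real.exp (m * a) / Real.exp (m * b) := by
    rw [← Real.exp_sub]; ring_nf
  rw [hexp, div_mul_eq_mul_div, ← sub_le_iff_le_add, le_div_iff₀ (Real.exp_pos _), mul_comm]
  exact hvb

theorem tendsto_zero_of_hasDerivWithinAt_le_neg_mul_add {W W' g : ℝ → ℝ} {a m : ℝ} (hm : 0 < m)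
    (hW : ∀ t ∈ Ici a, HasDerivWithinAt W (W' t) (Ici a) t)
    (hW' : ∀ t ∈ Ici a, W' t ≤ -m * W t + g t) (hW0 : ∀ t ∈ Ici a, 0 ≤ W t)
    (hg : ContinuousOn g (Ici a)) (hg0 : ∀ t ∈ Ici a, 0 ≤ g t) (hgi : IntegrableOn g (Ici a)) :
    Tendsto W atTop (𝓝 0) := by
  refine tendsto_order.2 ⟨fun r hr => ?_, fun ε hε => ?_⟩
  · filter_upwards [eventually_ge_atTop a] with t ht using hr.trans_le (hW0 t ht)
  obtain ⟨a', ha'⟩ := ((tendsto_setIntegral_Ioi_atTop_zero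
    (hgi.mono_set Ioi_subset_Ici_self)).eventually (gt_mem_nhds (half_pos hε))).and
    (eventually_ge_atTop a) |>.exists
  have hdecay : Tendsto (fun b => Real.exp (-(m * (b - a'))) * W a') atTop (𝓝 0) := by
    have h := (Real.tendsto_exp_neg_atTop_nhds_zero.comp
      ((tendsto_atTop_add_const_right atTop (-a') tendsto_id).const_mul_atTop hm)).mul_const (W a')
    simpa [sub_eq_add_neg] using h
  filter_upwards [hdecay.eventually (gt_mem_nhds (half_pos hε)), eventually_ge_atTop a']
    with b hb hab
  have hIci : Ici a' ⊆ Ici a := Ici_subset_Ici.2 ha'.2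
  have hcomp := le_exp_mul_add_integral_of_hasDerivWithinAt_le hm.le
    (fun t ht => (hW t (hIci ht)).mono hIci) (fun t ht => hW' t (hIci ht)) (hg.mono hIci)
    (fun t ht => hg0 t (hIci ht)) hab
  have hgi' : IntegrableOn g (Ioi a') := hgi.mono_set (Ioi_subset_Ici_self.trans hIci)
  have htail : ∫ t in a'..b, g t ≤ ∫ t in Ioi a', g t := by
    rw [intervalIntegral.integral_of_le hab]
    exact setIntegral_mono_set hgi' ((ae_restrict_iff' measurableSet_Ioi).2
      (Eventually.of_forall fun t ht => hg0 t (hIci (Ioi_subset_Ici_self ht))))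
      (Eventually.of_forall Ioc_subset_Ioi_self)
  linarith [ha'.1]

theorem two_mul_inner_neg_add_le {F : Type*} [NormedAddCommGroup F] [InnerProductSpace ℝ F]
    {A : F → F} {m : ℝ} (hm : 0 < m) (hA : ∀ x, m * ‖x‖ ^ 2 ≤ ⟪x, A x⟫) (x y : F) :
    2 * ⟪x, -A x + y⟫ ≤ -m * ‖x‖ ^ 2 + ‖y‖ ^ 2 / m := by
  have hxy : ⟪x, y⟫ ≤ ‖x‖ * ‖y‖ := real_inner_le_norm x y
  have hamgm : 2 * (‖x‖ * ‖y‖) ≤ m * ‖x‖ ^ 2 + ‖y‖ ^ 2 / m := by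
    have hsq : m * ‖x‖ ^ 2 + ‖y‖ ^ 2 / m - 2 * (‖x‖ * ‖y‖) = (m * ‖x‖ - ‖y‖) ^ 2 / m := by
      field_simp
      ring
    linarith [div_nonneg (sq_nonneg (m * ‖x‖ - ‖y‖)) hm.le]
  rw [inner_add_right, inner_neg_right]
  linarith [hA x]

theorem tendsto_zero_of_hasDerivWithinAt_neg_add {F : Type*} [NormedAddCommGroup F]
    [InnerProductSpace ℝ F] {A : F → F} {p s : ℝ → F} {a m : ℝ} (hm : 0 < m)
    (hA : ∀ x, m * ‖x‖ ^ 2 ≤ ⟪x, A x⟫)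
    (hp : ∀ t ∈ Ici a, HasDerivWithinAt p (-A (p t) + s t) (Ici a) t)
    (hs : ContinuousOn s (Ici a)) (hsi : IntegrableOn (fun t => ‖s t‖ ^ 2) (Ici a)) :
    Tendsto p atTop (𝓝 0) :=
  tendsto_zero_of_tendsto_norm_sq <| tendsto_zero_of_hasDerivWithinAt_le_neg_mul_add hm
    (fun t ht => (hp t ht).norm_sq) (fun t _ => two_mul_inner_neg_add_le hm hA (p t) (s t))
    (fun t _ => sq_nonneg _) ((continuous_norm.comp_continuousOn hs).pow 2 |>.div_const m)
    (fun t _ => by positivity) (hsi.div_const m)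

theorem exists_pos_mul_norm_sq_le {E : Type*} [NormedAddCommGroup E] [NormedSpace ℝ E]
    [FiniteDimensional ℝ E] {Q : E → ℝ} (hQ : Continuous Q)
    (hsmul : ∀ (c : ℝ) x, Q (c • x) = c ^ 2 * Q x) (hpos : ∀ x ≠ 0, 0 < Q x) :
    ∃ m > 0, ∀ x, m * ‖x‖ ^ 2 ≤ Q x := by
  rcases subsingleton_or_nontrivial E with hE | hE
  · refine ⟨1, one_pos, fun x => ?_⟩
    have hQ0 : Q 0 = 0 := by simpa using hsmul 0 0
    simp [Subsingleton.elim x 0, hQ0]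
  obtain ⟨x₀, hx₀, hmin⟩ := (isCompact_sphere (0 : E) 1).exists_isMinOn
    (NormedSpace.sphere_nonempty.2 zero_le_one) hQ.continuousOn
  have hx₀1 : ‖x₀‖ = 1 := by simpa using hx₀
  refine ⟨Q x₀, hpos x₀ (norm_ne_zero_iff.1 (by rw [hx₀1]; exact one_ne_zero)), fun x => ?_⟩
  rcases eq_or_ne x 0 with rfl | hx
  · simpa using (hsmul 0 0).ge
  have hnx : ‖x‖ ≠ 0 := norm_ne_zero_iff.2 hx
  have hu : ‖x‖⁻¹ • x ∈ Metric.sphere (0 : E) 1 := by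
    simp [norm_smul, hnx]
  calc Q x₀ * ‖x‖ ^ 2 ≤ Q (‖x‖⁻¹ • x) * ‖x‖ ^ 2 := by gcongr; exact hmin hu
    _ = Q x := by rw [hsmul, inv_pow]; field_simp

theorem norm_toLp_sq_eq_dotProduct {ι : Type*} [Fintype ι] (x : ι → ℝ) :
    ‖WithLp.toLp 2 x‖ ^ 2 = x ⬝ᵥ x := by
  rw [← real_inner_self_eq_norm_sq, EuclideanSpace.inner_toLp_toLp]
  rfl

theorem Matrix.PosDef.exists_pos_mul_norm_sq_le_inner {ι : Type*} [Fintype ι]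
    {Λ : Matrix ι ι ℝ} (hΛ : Λ.PosDef) :
    ∃ m > 0, ∀ x : EuclideanSpace ℝ ι, m * ‖x‖ ^ 2 ≤ ⟪x, WithLp.toLp 2 (Λ *ᵥ x.ofLp)⟫ := by
  simp only [EuclideanSpace.inner_eq_star_dotProduct, star_trivial]
  refine exists_pos_mul_norm_sq_le (by fun_prop) (fun c x => ?_) (fun x hx => ?_)
  · simp only [WithLp.ofLp_smul, mulVec_smul, smul_dotProduct, dotProduct_smul, smul_eq_mul]
    ring
  · rw [dotProduct_comm]
    simpa using hΛ.dotProduct_mulVec_pos (x := x.ofLp) (by simpa using hx)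

theorem HasDerivWithinAt.toLp {ι : Type*} [Fintype ι] {f : ℝ → ι → ℝ} {f' : ι → ℝ} {s : Set ℝ}
    {t : ℝ} (h : HasDerivWithinAt f f' s t) :
    HasDerivWithinAt (fun t => WithLp.toLp 2 (f t)) (WithLp.toLp 2 f') s t :=
  (PiLp.hasFDerivAt_toLp 2 (f t)).comp_hasDerivWithinAt t h

theorem lipschitzOnWith_toLp_of_hasDerivWithinAt {ι : Type*} [Fintype ι] {f f' : ℝ → ι → ℝ}
    {s : Set ℝ} {b : ℝ} (hs : Convex ℝ s) (hf : ∀ t ∈ s, HasDerivWithinAt f (f' t) s t)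
    (hf' : ∀ t ∈ s, f' t ⬝ᵥ f' t ≤ b) :
    LipschitzOnWith (√b).toNNReal (fun t => WithLp.toLp 2 (f t)) s := by
  refine hs.lipschitzOnWith_of_nnnorm_hasDerivWithin_le (fun t ht => (hf t ht).toLp)
    fun t ht => ?_
  rw [← NNReal.coe_le_coe, coe_nnnorm, Real.coe_toNNReal _ (Real.sqrt_nonneg b)]
  exact Real.le_sqrt_of_sq_le (by simpa only [norm_toLp_sq_eq_dotProduct] using hf' t ht)

theorem tendsto_toLp_zero_iff {α ι : Type*} [Fintype ι] {l : Filter α} {f : α → ι → ℝ} :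
    Tendsto (fun t => WithLp.toLp 2 (f t)) l (𝓝 0) ↔ Tendsto f l (𝓝 0) :=
  ((PiLp.homeomorph 2 fun _ : ι => ℝ).symm.isInducing.tendsto_nhds_iff (y := 0)).symm

theorem tendsto_mulVec_zero_of_dotProduct_le {α ι : Type*} [Fintype ι] {l : Filter α}
    {P : α → Matrix ι ι ℝ} {x : α → ι → ℝ} {c : ℝ}
    (hP : ∀ᶠ t in l, ∀ y, (P t *ᵥ y) ⬝ᵥ (P t *ᵥ y) ≤ c * (y ⬝ᵥ y)) (hx : Tendsto x l (𝓝 0)) :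
    Tendsto (fun t => P t *ᵥ x t) l (𝓝 0) := by
  rw [← tendsto_toLp_zero_iff]
  refine tendsto_zero_of_tendsto_norm_sq (squeeze_zero' (Eventually.of_forall fun _ => sq_nonneg _)
    (hP.mono fun t ht => ?_) (g := fun t => c * ‖WithLp.toLp 2 (x t)‖ ^ 2) ?_)
  · simpa only [norm_toLp_sq_eq_dotProduct] using ht (x t)
  · simpa using (((continuous_norm.pow 2).tendsto 0).comp (tendsto_toLp_zero_iff.2 hx)).const_mul c

theorem pose_and_rate_tracking_convergence_general
    (Λ : Matrix (Fin 6) (Fin 6) ℝ) (hΛ : Λ.PosDef)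
    (p s νr νr' νt : ℝ → Fin 6 → ℝ)
    (P : ℝ → Matrix (Fin 6) (Fin 6) ℝ)
    (hs_cont : ContinuousOn s (Set.Ici 0))
    (hsL2 : IntegrableOn (fun t => s t ⬝ᵥ s t) (Set.Ici 0))
    (hp : ∀ t ∈ Set.Ici (0 : ℝ),
      HasDerivWithinAt p (-(Λ *ᵥ p t) + s t) (Set.Ici 0) t)
    (hP_bd : ∃ c : ℝ, ∀ t ∈ Set.Ici (0 : ℝ), ∀ x : Fin 6 → ℝ,
      (P t *ᵥ x) ⬝ᵥ (P t *ᵥ x) ≤ c * (x ⬝ᵥ x))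
    (hνr : ∀ t ∈ Set.Ici (0 : ℝ), νr t = P t *ᵥ s t)
    (hνr' : ∀ t ∈ Set.Ici (0 : ℝ), HasDerivWithinAt νr (νr' t) (Set.Ici 0) t)
    (hνr'_bd : ∃ b : ℝ, ∀ t ∈ Set.Ici (0 : ℝ), νr' t ⬝ᵥ νr' t ≤ b)
    (hνt : ∀ t ∈ Set.Ici (0 : ℝ), νt t = νr t - P t *ᵥ (Λ *ᵥ p t)) :
    Tendsto p atTop (nhds 0) ∧ Tendsto νr atTop (nhds 0) ∧
      Tendsto νt atTop (nhds 0) := by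
  obtain ⟨c, hc⟩ := hP_bd
  obtain ⟨b, hb⟩ := hνr'_bd
  obtain ⟨m, hm, hΛm⟩ := hΛ.exists_pos_mul_norm_sq_le_inner
  have hp_lim : Tendsto p atTop (𝓝 0) := by
    rw [← tendsto_toLp_zero_iff]
    exact tendsto_zero_of_hasDerivWithinAt_neg_add (s := fun t => WithLp.toLp 2 (s t)) hm hΛm
      (fun t ht => (hp t ht).toLp) ((PiLp.continuous_toLp 2 _).comp_continuousOn hs_cont)
      (by simpa only [norm_toLp_sq_eq_dotProduct] using hsL2)
  have hνr_sq : IntegrableOn (fun t => ‖WithLp.toLp 2 (νr t)‖ ^ 2) (Ici 0) := by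
    refine Integrable.mono' (hsL2.const_mul c) ?_ ((ae_restrict_iff' measurableSet_Ici).2
      (Eventually.of_forall fun t ht => ?_))
    · exact ((continuous_norm.pow 2).comp_continuousOn ((PiLp.continuous_toLp 2 _).comp_continuousOn
        fun t ht => (hνr' t ht).continuousWithinAt)).aestronglyMeasurable measurableSet_Ici
    · rw [Real.norm_of_nonneg (sq_nonneg _), norm_toLp_sq_eq_dotProduct, hνr t ht]
      exact hc t ht (s t)
  have hνr_lim : Tendsto νr atTop (𝓝 0) := tendsto_toLp_zero_iff.1 <|
    tendsto_zero_of_lipschitzOnWith_of_integrableOn_norm_sq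
      (lipschitzOnWith_toLp_of_hasDerivWithinAt (convex_Ici 0) hνr' hb) hνr_sq
  have hq_lim : Tendsto (fun t => P t *ᵥ (Λ *ᵥ p t)) atTop (𝓝 0) :=
    tendsto_mulVec_zero_of_dotProduct_le ((eventually_ge_atTop 0).mono hc) (by
      simpa [Function.comp_def] using
        ((continuous_const.matrix_mulVec continuous_id).tendsto 0).comp hp_lim)
  refine ⟨hp_lim, hνr_lim, ?_⟩
  simpa using (hνr_lim.sub hq_lim).congr' ((eventually_ge_atTop 0).mono fun t ht => (hνt t ht).symm)

/-- **Asymptotic convergence of the pose and rate tracking errors (Theorem 2, assembled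
form).**  If `Λ` is symmetric positive definite, `p̃` satisfies the stable filter
`ṗ̃ = −Λ p̃ + s` on `[0,∞)` with `s` continuous and square-integrable, `ν̃_r = P s` with
`P` continuous and uniformly bounded, `ν̃_r` continuously differentiable with uniformly
bounded derivative, and `ν̃ = ν̃_r − P Λ p̃`, then `p̃ → 0`, `ν̃_r → 0`, and `ν̃ → 0` as
`t → ∞`.  (Euclidean squared norms are expressed with dot products.) -/
theorem pose_and_rate_tracking_convergence
    (Λ : Matrix (Fin 6) (Fin 6) ℝ) (hΛ : Λ.PosDef)
    (p s νr νr' νt : ℝ → Fin 6 → ℝ)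
    (P : ℝ → Matrix (Fin 6) (Fin 6) ℝ)
    (hs_cont : ContinuousOn s (Set.Ici 0))
    (hsL2 : IntegrableOn (fun t => s t ⬝ᵥ s t) (Set.Ici 0))
    (hp : ∀ t ∈ Set.Ici (0 : ℝ),
      HasDerivWithinAt p (-(Λ *ᵥ p t) + s t) (Set.Ici 0) t)
    (hP_cont : ContinuousOn P (Set.Ici 0))
    (hP_bd : ∃ c : ℝ, ∀ t ∈ Set.Ici (0 : ℝ), ∀ x : Fin 6 → ℝ,
      (P t *ᵥ x) ⬝ᵥ (P t *ᵥ x) ≤ c * (x ⬝ᵥ x))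
    (hνr : ∀ t ∈ Set.Ici (0 : ℝ), νr t = P t *ᵥ s t)
    (hνr' : ∀ t ∈ Set.Ici (0 : ℝ), HasDerivWithinAt νr (νr' t) (Set.Ici 0) t)
    (hνr'_cont : ContinuousOn νr' (Set.Ici 0))
    (hνr'_bd : ∃ b : ℝ, ∀ t ∈ Set.Ici (0 : ℝ), νr' t ⬝ᵥ νr' t ≤ b)
    (hνt : ∀ t ∈ Set.Ici (0 : ℝ), νt t = νr t - P t *ᵥ (Λ *ᵥ p t)) :
    Tendsto p atTop (nhds 0) ∧ Tendsto νr atTop (nhds 0) ∧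
      Tendsto νt atTop (nhds 0) :=
  pose_and_rate_tracking_convergence_general Λ hΛ p s νr νr' νt P hs_cont hsL2 hp hP_bd hνr hνr'
    hνr'_bd hνt
end

section
/- Lemma 2 (filtered error relation for the quaternion parameterization): let r, r_d : ℝ → ℝ³ be differentiable, let ω, ω_d : ℝ → ℝ³, and let δε : ℝ → ℝ³, δη : ℝ → ℝ be differentiable functions satisfying the quaternion-error kinematic relation δε̇(t) = −ω_d(t)^× δε(t) + ½(δη(t) I₃ + δε(t)^×)(ω(t) − ω_d(t)). Assume δη(t) I₃ + δε(t)^× is invertible for all t, and let Λ ∈ ℝ^{6×6} be symmetric positive definite. Define p̃(t) := (r(t) − r_d(t), δε(t)) ∈ ℝ⁶, s(t) := ṗ̃(t) + Λ p̃(t), P(t) := blkdiag(I₃, 2(δη(t) I₃ + δε(t)^×)⁻¹), ν(t) := (ṙ(t), ω(t)), ν_d(t) := (ṙ_d(t), ω_d(t) + 2(δη(t) I₃ + δε(t)^×)⁻¹ ω_d(t)^× δε(t)), and ν_r(t) := ν_d(t) − P(t) Λ p̃(t). Then ν(t) − ν_r(t) = P(t) s(t) for all t. -/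
/-! Only the rotational block needs work. Multiplying the quaternion-error kinematics by
`2(δη I₃ + δε^×)⁻¹` solves them for the angular velocity error,
`2(δη I₃ + δε^×)⁻¹ δε̇ = ω − ω_d − 2(δη I₃ + δε^×)⁻¹ ω_d^× δε`,
which is the second block of `ν − ν_d`. The first block of `ν − ν_d` is `ṙ − ṙ_d`,
and the `P Λ p̃` terms agree by linearity. -/

open Matrix

/-- The cross (skew-symmetric) operator `v^×` with `v^× w = v × w`. -/
def crossMat (v : Fin 3 → ℝ) : Matrix (Fin 3) (Fin 3) ℝ :=
  !![0, -v 2, v 1; v 2, 0, -v 0; -v 1, v 0, 0]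

/-- Concatenation of two vectors in `ℝ³` into a vector in `ℝ⁶`. -/
def vcat (a b : Fin 3 → ℝ) : Fin 6 → ℝ := Fin.append a b

/-- Block-diagonal `6 × 6` matrix with `3 × 3` diagonal blocks `A` and `B`. -/
def blkdiag (A B : Matrix (Fin 3) (Fin 3) ℝ) : Matrix (Fin 6) (Fin 6) ℝ :=
  Matrix.reindex finSumFinEquiv finSumFinEquiv (Matrix.fromBlocks A 0 0 B)

theorem vcat_eq_sumElim_comp (a b : Fin 3 → ℝ) :
    vcat a b = Sum.elim a b ∘ finSumFinEquiv.symm :=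
  (Equiv.eq_comp_symm _ _ _).mpr Fin.append_comp_sumElim

theorem vcat_sub (a b c d : Fin 3 → ℝ) : vcat a b - vcat c d = vcat (a - c) (b - d) := by
  simp only [vcat_eq_sumElim_comp, ← Pi.sub_comp, Sum.elim_sub_sub]

theorem blkdiag_mulVec (A B : Matrix (Fin 3) (Fin 3) ℝ) (a b : Fin 3 → ℝ) :
    blkdiag A B *ᵥ vcat a b = vcat (A *ᵥ a) (B *ᵥ b) := by
  rw [blkdiag, reindex_apply, submatrix_mulVec_equiv, Equiv.symm_symm, vcat_eq_sumElim_comp,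
    vcat_eq_sumElim_comp, Function.comp_assoc, Equiv.symm_comp_self, Function.comp_id,
    fromBlocks_mulVec]
  simp

theorem two_smul_inv_mulVec_of_eq {K n : Type*} [Field K] [CharZero K] [Fintype n]
    [DecidableEq n] {A : Matrix n n K} (hA : IsUnit A.det) {e c u : n → K}
    (he : e = -c + (1 / 2 : K) • (A *ᵥ u)) :
    ((2 : K) • A⁻¹) *ᵥ e = u - (2 : K) • (A⁻¹ *ᵥ c) := by
  rw [he, smul_mulVec, mulVec_add, mulVec_neg, mulVec_smul, mulVec_mulVec,
    nonsing_inv_mul A hA, one_mulVec]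
  module

theorem filtered_error_quaternion_general
    (r' rd' ω ωd : ℝ → Fin 3 → ℝ)
    (δε δε' : ℝ → Fin 3 → ℝ) (δη : ℝ → ℝ)
    (Λ : Matrix (Fin 6) (Fin 6) ℝ)
    (hkin : ∀ t, δε' t = -(crossMat (ωd t) *ᵥ δε t) +
      (1 / 2 : ℝ) • ((δη t • (1 : Matrix (Fin 3) (Fin 3) ℝ) + crossMat (δε t)) *ᵥ
        (ω t - ωd t)))
    (hinv : ∀ t, IsUnit (δη t • (1 : Matrix (Fin 3) (Fin 3) ℝ) + crossMat (δε t)).det)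
    (ptil s ν νd νr : ℝ → Fin 6 → ℝ)
    (P : ℝ → Matrix (Fin 6) (Fin 6) ℝ)
    (hsdef : ∀ t, s t = vcat (r' t - rd' t) (δε' t) + Λ *ᵥ ptil t)
    (hP : ∀ t, P t = blkdiag 1
      ((2 : ℝ) • (δη t • (1 : Matrix (Fin 3) (Fin 3) ℝ) + crossMat (δε t))⁻¹))
    (hν : ∀ t, ν t = vcat (r' t) (ω t))
    (hνd : ∀ t, νd t = vcat (rd' t) (ωd t +
      (2 : ℝ) • ((δη t • (1 : Matrix (Fin 3) (Fin 3) ℝ) + crossMat (δε t))⁻¹ *ᵥ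
        (crossMat (ωd t) *ᵥ δε t))))
    (hνr : ∀ t, νr t = νd t - P t *ᵥ (Λ *ᵥ ptil t)) :
    ∀ t, ν t - νr t = P t *ᵥ s t := by
  intro t
  have hω := two_smul_inv_mulVec_of_eq (hinv t) (hkin t)
  rw [sub_sub] at hω
  rw [hν, hνr, hνd, hsdef, mulVec_add, hP, blkdiag_mulVec, one_mulVec, hω, ← hP, ← vcat_sub]
  abel

/-- **Lemma 2 (filtered error relation for the quaternion parameterization).**
With quaternion error `(δε, δη)` satisfying
`δε̇ = −ω_d^× δε + ½(δη I₃ + δε^×)(ω − ω_d)` and `δη I₃ + δε^×` invertible,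
pose error `p̃ = (r − r_d, δε)`, filtered error `s = ṗ̃ + Λ p̃`,
`P = blkdiag(I₃, 2(δη I₃ + δε^×)⁻¹)`, `ν = (ṙ, ω)`,
`ν_d = (ṙ_d, ω_d + 2(δη I₃ + δε^×)⁻¹ ω_d^× δε)`, and `ν_r = ν_d − P Λ p̃`,
one has `ν − ν_r = P s` for all `t`. -/
theorem filtered_error_quaternion
    (r r' rd rd' ω ωd : ℝ → Fin 3 → ℝ)
    (δε δε' : ℝ → Fin 3 → ℝ) (δη δη' : ℝ → ℝ)
    (Λ : Matrix (Fin 6) (Fin 6) ℝ) (hΛ : Λ.PosDef)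
    (hr : ∀ t, HasDerivAt r (r' t) t)
    (hrd : ∀ t, HasDerivAt rd (rd' t) t)
    (hδε : ∀ t, HasDerivAt δε (δε' t) t)
    (hδη : ∀ t, HasDerivAt δη (δη' t) t)
    (hkin : ∀ t, δε' t = -(crossMat (ωd t) *ᵥ δε t) +
      (1 / 2 : ℝ) • ((δη t • (1 : Matrix (Fin 3) (Fin 3) ℝ) + crossMat (δε t)) *ᵥ
        (ω t - ωd t)))
    (hinv : ∀ t, IsUnit (δη t • (1 : Matrix (Fin 3) (Fin 3) ℝ) + crossMat (δε t)).det)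
    (ptil s ν νd νr : ℝ → Fin 6 → ℝ)
    (P : ℝ → Matrix (Fin 6) (Fin 6) ℝ)
    (hptil : ∀ t, ptil t = vcat (r t - rd t) (δε t))
    (hsdef : ∀ t, s t = vcat (r' t - rd' t) (δε' t) + Λ *ᵥ ptil t)
    (hP : ∀ t, P t = blkdiag 1
      ((2 : ℝ) • (δη t • (1 : Matrix (Fin 3) (Fin 3) ℝ) + crossMat (δε t))⁻¹))
    (hν : ∀ t, ν t = vcat (r' t) (ω t))
    (hνd : ∀ t, νd t = vcat (rd' t) (ωd t +
      (2 : ℝ) • ((δη t • (1 : Matrix (Fin 3) (Fin 3) ℝ) + crossMat (δε t))⁻¹ *ᵥ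
        (crossMat (ωd t) *ᵥ δε t))))
    (hνr : ∀ t, νr t = νd t - P t *ᵥ (Λ *ᵥ ptil t)) :
    ∀ t, ν t - νr t = P t *ᵥ s t :=
  filtered_error_quaternion_general r' rd' ω ωd δε δε' δη Λ hkin hinv ptil s ν νd νr P hsdef hP hν
    hνd hνr
end

section
/- Time derivative of the projected attitude error (key computation in the proof of Lemma 3): let C : ℝ → ℝ^{3×3} be differentiable and ω̃ : ℝ → ℝ³ be such that Ċ(t) = −ω̃(t)^× C(t) for all t. Then d/dt (𝒫(C(t))^V) = −½ (tr(C(t)) I₃ − C(t)) ω̃(t) for all t. -/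
open Matrix

attribute [local instance] Matrix.normedAddCommGroup Matrix.normedSpace

/-- The uncross operator `(·)^V`, the inverse of `crossMat` on skew-symmetric
matrices. -/
def uncross (A : Matrix (Fin 3) (Fin 3) ℝ) : Fin 3 → ℝ := ![A 2 1, A 0 2, A 1 0]

/-- The antisymmetric projection operator `𝒫(U) = ½(U − Uᵀ)`. -/
noncomputable def projAnti (U : Matrix (Fin 3) (Fin 3) ℝ) : Matrix (Fin 3) (Fin 3) ℝ :=
  (1 / 2 : ℝ) • (U - Uᵀ)

/-! Since `U ↦ 𝒫(U)^V` is linear, the derivative of `𝒫(C)^V` is `𝒫(Ċ)^V = −𝒫(ω̃^× C)^V`,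
and a direct computation gives `𝒫(v^× C)^V = ½ (tr(C) I₃ − C) v`. -/

noncomputable def uncrossProjAntiLinear :
    Matrix (Fin 3) (Fin 3) ℝ →ₗ[ℝ] (Fin 3 → ℝ) where
  toFun U := uncross (projAnti U)
  map_add' U V := by
    ext i; fin_cases i <;> simp [uncross, projAnti] <;> ring
  map_smul' c U := by
    ext i; fin_cases i <;> simp [uncross, projAnti] <;> ring

theorem HasDerivAt.uncross_projAnti {f : ℝ → Matrix (Fin 3) (Fin 3) ℝ}
    {f' : Matrix (Fin 3) (Fin 3) ℝ} {t : ℝ} (hf : HasDerivAt f f' t) :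
    HasDerivAt (fun τ => uncross (projAnti (f τ))) (uncross (projAnti f')) t :=
  (LinearMap.toContinuousLinearMap uncrossProjAntiLinear).hasFDerivAt.comp_hasDerivAt t hf

theorem uncross_projAnti_neg (U : Matrix (Fin 3) (Fin 3) ℝ) :
    uncross (projAnti (-U)) = -uncross (projAnti U) :=
  map_neg uncrossProjAntiLinear U

theorem uncross_projAnti_crossMat_mul (v : Fin 3 → ℝ) (C : Matrix (Fin 3) (Fin 3) ℝ) :
    uncross (projAnti (crossMat v * C)) = (1 / 2 : ℝ) • ((C.trace • 1 - C) *ᵥ v) := by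
  ext i
  fin_cases i <;>
    simp [uncross, projAnti, crossMat, mulVec, vecMul, dotProduct, Fin.sum_univ_three,
      trace, one_apply] <;> ring

/-- **Time derivative of the projected attitude error (key computation in the proof of
Lemma 3).**  If `Ċ(t) = −ω̃(t)^× C(t)`, then
`d/dt (𝒫(C(t))^V) = −½ (tr(C(t)) I₃ − C(t)) ω̃(t)` for all `t`. -/
theorem deriv_projected_attitude_error
    (C : ℝ → Matrix (Fin 3) (Fin 3) ℝ) (ωtil : ℝ → Fin 3 → ℝ)
    (hC : ∀ t, HasDerivAt C (-(crossMat (ωtil t) * C t)) t) :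
    ∀ t, HasDerivAt (fun τ => uncross (projAnti (C τ)))
      (-((1 / 2 : ℝ) •
        (((Matrix.trace (C t)) • (1 : Matrix (Fin 3) (Fin 3) ℝ) - C t) *ᵥ ωtil t))) t := by
  intro t
  have h := (hC t).uncross_projAnti
  rwa [uncross_projAnti_neg, uncross_projAnti_crossMat_mul] at h
end

section
/- Nonsingularity of the SO(3) error mapping matrix: for every C ∈ SO(3), det(tr(C) I₃ − C) = tr(C)² − 1. Consequently, tr(C) I₃ − C is invertible if and only if tr(C) ≠ 1 and tr(C) ≠ −1; in particular it is invertible whenever tr(C) > 1 (i.e., whenever C is a rotation by an angle strictly less than π/2 in magnitude). -/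
/-!
For `C` orthogonal with `det C = 1`, the adjugate `det C • C⁻¹` is `Cᵀ`, so the second
coefficient `tr (adj C)` of the characteristic polynomial `t³ - tr C t² + tr (adj C) t - det C`
equals `tr C`. Evaluating at `t = tr C` the two cubic terms cancel and `tr C ^ 2 - 1` remains.
-/

open Matrix

theorem Matrix.adjugate_eq_transpose_of_transpose_mul_self_eq_one {n R : Type*} [Fintype n]
    [DecidableEq n] [CommRing R] {A : Matrix n n R} (hA : Aᵀ * A = 1) (hdet : A.det = 1) :
    A.adjugate = Aᵀ := by
  calc A.adjugate = Aᵀ * (A * A.adjugate) := by rw [← Matrix.mul_assoc, hA, Matrix.one_mul]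
    _ = Aᵀ := by rw [mul_adjugate, hdet, one_smul, Matrix.mul_one]

theorem Matrix.det_smul_one_sub_fin_three {R : Type*} [CommRing R] (A : Matrix (Fin 3) (Fin 3) R)
    (t : R) :
    (t • (1 : Matrix (Fin 3) (Fin 3) R) - A).det =
      t ^ 3 - A.trace * t ^ 2 + A.adjugate.trace * t - A.det := by
  simp only [det_fin_three, trace_fin_three, adjugate_fin_three, one_fin_three, smul_of, smul_cons,
    smul_empty, smul_eq_mul, mul_one, mul_zero, sub_apply, of_apply, cons_val', cons_val_zero,
    cons_val_one, cons_val, cons_val_fin_one]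
  ring

theorem Matrix.det_trace_smul_one_sub_of_transpose_mul_self_eq_one
    {R : Type*} [CommRing R] {A : Matrix (Fin 3) (Fin 3) R} (hA : Aᵀ * A = 1) (hdet : A.det = 1) :
    (A.trace • (1 : Matrix (Fin 3) (Fin 3) R) - A).det = A.trace ^ 2 - 1 := by
  rw [det_smul_one_sub_fin_three, adjugate_eq_transpose_of_transpose_mul_self_eq_one hA hdet,
    trace_transpose, hdet]
  ring

/-- **Nonsingularity of the SO(3) error mapping matrix.**
For every `C ∈ SO(3)` (i.e. `CᵀC = I₃`, `det C = 1`),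
`det(tr(C) I₃ − C) = tr(C)² − 1`; hence `tr(C) I₃ − C` is invertible iff
`tr(C) ≠ 1` and `tr(C) ≠ −1`, and in particular whenever `tr(C) > 1`. -/
theorem SO3_error_matrix_nonsingular
    (C : Matrix (Fin 3) (Fin 3) ℝ) (hC : Cᵀ * C = 1) (hdet : C.det = 1) :
    ((Matrix.trace C) • (1 : Matrix (Fin 3) (Fin 3) ℝ) - C).det =
      (Matrix.trace C) ^ 2 - 1 ∧
    (IsUnit ((Matrix.trace C) • (1 : Matrix (Fin 3) (Fin 3) ℝ) - C) ↔
      Matrix.trace C ≠ 1 ∧ Matrix.trace C ≠ -1) ∧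
    (1 < Matrix.trace C →
      IsUnit ((Matrix.trace C) • (1 : Matrix (Fin 3) (Fin 3) ℝ) - C)) := by
  have hdet_error := det_trace_smul_one_sub_of_transpose_mul_self_eq_one hC hdet
  have hunit_iff : IsUnit (C.trace • (1 : Matrix (Fin 3) (Fin 3) ℝ) - C) ↔
      C.trace ≠ 1 ∧ C.trace ≠ -1 := by
    rw [isUnit_iff_isUnit_det, hdet_error, isUnit_iff_ne_zero, sub_ne_zero, sq_ne_one_iff]
  exact ⟨hdet_error, hunit_iff, fun htr => hunit_iff.mpr ⟨htr.ne', by linarith⟩⟩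
end
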